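/- For every integer y ≥ 0, the sequence x ↦ U(x,y) = (1/4)(x choose y)^4 ((x-y+1)(y+1)/((x+1)(x+2)))^{2x-3} satisfies U(x+1,y)/U(x,y) < 1 for x ≥ 2y and U(x+1,y)/U(x,y) > 1 for y ≤ x < 2y; hence the maximum over x ≥ y is attained at x = 2y. -/
import Mathlib


noncomputable section

/-- `U(x,y) = (1/4)·(x choose y)⁴ · ((x-y+1)(y+1)/((x+1)(x+2)))^(2x-3)`,
where the possibly negative exponent `2x-3` is interpreted as a real power
of a positive rational. -/
def Ufun (x y : ℕ) : ℝ :=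
  (1 / 4) * (x.choose y : ℝ) ^ 4 *
    (((((x : ℝ) - (y : ℝ) + 1) * ((y : ℝ) + 1)) /
        (((x : ℝ) + 1) * ((x : ℝ) + 2))) ^ (2 * (x : ℝ) - 3))

namespace UfunAux

lemma bern (a d : ℝ) (ha : 0 ≤ a) (hd : 0 ≤ d) : ∀ m : ℕ,
    a^(m+1) + ((m:ℝ)+1)*a^m*d ≤ (a+d)^(m+1) := by
  intro m
  induction m with
  | zero => simp
  | succ m ih =>
    have h2 : 0 ≤ ((m:ℝ)+1)*a^m*(d*d) := by positivity
    have h1 : a^(m+1+1) + ((m:ℝ)+1+1)*a^(m+1)*d ≤ (a+d)*(a^(m+1) + ((m:ℝ)+1)*a^m*d) := by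
      rw [pow_succ, pow_succ]
      nlinarith [h2]
    calc a^(m+1+1) + ((↑(m+1):ℝ)+1)*a^(m+1)*d
        = a^(m+1+1) + ((m:ℝ)+1+1)*a^(m+1)*d := by push_cast; ring
      _ ≤ (a+d)*(a^(m+1) + ((m:ℝ)+1)*a^m*d) := h1
      _ ≤ (a+d)*(a+d)^(m+1) := mul_le_mul_of_nonneg_left ih (by linarith)
      _ = (a+d)^(m+1+1) := by ring

lemma core1 (c c' e r NX N' DX D' : ℝ) (n : ℕ)
    (hcp : 0 < c) (hr : 0 < r) (hN : 0 < NX) (hD' : 0 < D')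
    (hN' : 0 ≤ N') (hDX : 0 ≤ DX)
    (hce : c * e = c' * r)
    (hQ : N' * DX ≤ NX * D')
    (hkey : e^4 * N'^2 < r^4 * D'^2) :
    c'^4 * N'^(n+2) * (4 * DX^n) < c^4 * NX^n * (4 * D'^(n+2)) := by
  have hkc : c'^4 * N'^2 < c^4 * D'^2 := by
    have e4 : c'^4 * r^4 = c^4 * e^4 := by
      rw [show c'^4*r^4 = (c'*r)^4 by ring, ← hce]; ring
    have e5 : (c'^4 * r^4) * N'^2 = (c^4 * e^4) * N'^2 := by rw [e4]
    have h6 := mul_lt_mul_of_pos_left hkey (pow_pos hcp 4)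
    have h7 : c'^4 * N'^2 * r^4 < c^4 * D'^2 * r^4 := by nlinarith [h6, e5]
    exact lt_of_mul_lt_mul_right h7 (by positivity)
  have hp : (N'*DX)^n ≤ (NX*D')^n := pow_le_pow_left₀ (mul_nonneg hN' hDX) hQ n
  have hA : 0 ≤ c'^4*N'^2 := by positivity
  have hB : 0 < (NX*D')^n := by positivity
  have h8 := mul_le_mul_of_nonneg_left hp hA
  have h9 : (c'^4*N'^2)*(NX*D')^n < (c^4*D'^2)*(NX*D')^n := mul_lt_mul_of_pos_right hkc hB
  have e1 : c'^4*N'^(n+2)*(4*DX^n) = 4*((c'^4*N'^2) * (N'*DX)^n) := by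
    rw [mul_pow]; ring
  have e2 : c^4*NX^n*(4*D'^(n+2)) = 4*((c^4*D'^2) * (NX*D')^n) := by
    rw [mul_pow]; ring
  rw [e1, e2]
  linarith

lemma core2 (c c' e r NX N' DX D' : ℝ) (m : ℕ)
    (hcp : 0 < c) (he : 0 < e) (hr : 0 < r) (hN : 0 < NX) (hD' : 0 < D')
    (hN' : 0 < N') (hDX : 0 ≤ DX)
    (hce : c * e = c' * r)
    (hQ : NX * D' ≤ N' * DX)
    (hkey : r^4 * D'^2 * (NX*D') < e^4 * N'^2 * (NX*D' + ((m:ℝ)+1)*(N'*DX - NX*D'))) :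
    c^4 * NX^(m+1) * (4 * D'^(m+1+2)) < c'^4 * N'^(m+1+2) * (4 * DX^(m+1)) := by
  have hkc : c^4*D'^2*(NX*D') < c'^4*N'^2*(NX*D' + ((m:ℝ)+1)*(N'*DX - NX*D')) := by
    have e4 : c'^4 * r^4 = c^4 * e^4 := by
      rw [show c'^4*r^4 = (c'*r)^4 by ring, ← hce]; ring
    have e5 : (c'^4 * r^4) * (N'^2*(NX*D' + ((m:ℝ)+1)*(N'*DX - NX*D'))) =
        (c^4 * e^4) * (N'^2*(NX*D' + ((m:ℝ)+1)*(N'*DX - NX*D'))) := by rw [e4]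
    have h6 := mul_lt_mul_of_pos_left hkey (pow_pos hcp 4)
    have h7 : c^4*D'^2*(NX*D')*r^4 < c'^4*N'^2*(NX*D' + ((m:ℝ)+1)*(N'*DX - NX*D'))*r^4 := by
      nlinarith [h6, e5]
    exact lt_of_mul_lt_mul_right h7 (by positivity)
  have hδ : 0 ≤ N'*DX - NX*D' := sub_nonneg.2 hQ
  have hbern := bern (NX*D') (N'*DX - NX*D') (by positivity) hδ m
  rw [show NX*D' + (N'*DX - NX*D') = N'*DX by ring] at hbern
  have h3 : c'^4*N'^2*((NX*D')^(m+1) + ((m:ℝ)+1)*(NX*D')^m*(N'*DX-NX*D')) ≤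
      c'^4*N'^2*(N'*DX)^(m+1) := mul_le_mul_of_nonneg_left hbern (by positivity)
  have h4 : c^4*D'^2*(NX*D')^(m+1) <
      c'^4*N'^2*((NX*D')^(m+1) + ((m:ℝ)+1)*(NX*D')^m*(N'*DX-NX*D')) := by
    have h6 := mul_lt_mul_of_pos_left hkc (show (0:ℝ) < (NX*D')^m by positivity)
    simp only [pow_succ]
    nlinarith [h6]
  have e1 : c'^4*N'^(m+1+2)*(4*DX^(m+1)) = 4*(c'^4*N'^2*(N'*DX)^(m+1)) := by
    rw [mul_pow]; ring
  have e2 : c^4*NX^(m+1)*(4*D'^(m+1+2)) = 4*(c^4*D'^2*(NX*D')^(m+1)) := by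
    rw [mul_pow]; ring
  rw [e1, e2]
  linarith

set_option maxHeartbeats 2000000 in
lemma key2R (b d : ℕ) :
    ((b:ℝ)+1)^5*((b:ℝ)+(d:ℝ)+2)*(2*(b:ℝ)+(d:ℝ)+3)^3*(2*(b:ℝ)+(d:ℝ)+4)^3 <
    (2*(b:ℝ)+(d:ℝ)+2)^4*((b:ℝ)+2)^2*((b:ℝ)+(d:ℝ)+2)^2*(((b:ℝ)+1)*((b:ℝ)+(d:ℝ)+2)*(2*(b:ℝ)+(d:ℝ)+3)*(2*(b:ℝ)+(d:ℝ)+4) + (4*(b:ℝ)+2*(d:ℝ)-1)*(((b:ℝ)+(d:ℝ)+2)*(2*(b:ℝ)+(d:ℝ)+3)*(d:ℝ))) := by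
  have h : (2*(b:ℝ)+(d:ℝ)+2)^4*((b:ℝ)+2)^2*((b:ℝ)+(d:ℝ)+2)^2*(((b:ℝ)+1)*((b:ℝ)+(d:ℝ)+2)*(2*(b:ℝ)+(d:ℝ)+3)*(2*(b:ℝ)+(d:ℝ)+4) + (4*(b:ℝ)+2*(d:ℝ)-1)*(((b:ℝ)+(d:ℝ)+2)*(2*(b:ℝ)+(d:ℝ)+3)*(d:ℝ))) - (((b:ℝ)+1)^5*((b:ℝ)+(d:ℝ)+2)*(2*(b:ℝ)+(d:ℝ)+3)^3*(2*(b:ℝ)+(d:ℝ)+4)^3) =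
      2688 + 15776*(d:ℝ) + 35080*(d:ℝ)^2 + 45518*(d:ℝ)^3 + 40899*(d:ℝ)^4 + 27103*(d:ℝ)^5 + 13193*(d:ℝ)^6 + 4527*(d:ℝ)^7 + 1024*(d:ℝ)^8 + 136*(d:ℝ)^9 + 8*(d:ℝ)^10 + 22144*(b:ℝ) + 128016*(b:ℝ)*(d:ℝ) + 273808*(b:ℝ)*(d:ℝ)^2 + 334957*(b:ℝ)*(d:ℝ)^3 + 274428*(b:ℝ)*(d:ℝ)^4 + 158620*(b:ℝ)*(d:ℝ)^5 + 64240*(b:ℝ)*(d:ℝ)^6 + 17451*(b:ℝ)*(d:ℝ)^7 + 2932*(b:ℝ)*(d:ℝ)^8 + 260*(b:ℝ)*(d:ℝ)^9 + 8*(b:ℝ)*(d:ℝ)^10 + 82112*(b:ℝ)^2 + 466152*(b:ℝ)^2*(d:ℝ) + 943738*(b:ℝ)^2*(d:ℝ)^2 + 1063071*(b:ℝ)^2*(d:ℝ)^3 + 773581*(b:ℝ)^2*(d:ℝ)^4 + 380131*(b:ℝ)^2*(d:ℝ)^5 + 124569*(b:ℝ)^2*(d:ℝ)^6 + 25774*(b:ℝ)^2*(d:ℝ)^7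 + 3016*(b:ℝ)^2*(d:ℝ)^8 + 158*(b:ℝ)^2*(d:ℝ)^9 + 2*(b:ℝ)^2*(d:ℝ)^10 + 180864*(b:ℝ)^3 + 1004940*(b:ℝ)^3*(d:ℝ) + 1892706*(b:ℝ)^3*(d:ℝ)^2 + 1916874*(b:ℝ)^3*(d:ℝ)^3 + 1205274*(b:ℝ)^3*(d:ℝ)^4 + 487944*(b:ℝ)^3*(d:ℝ)^5 + 124184*(b:ℝ)^3*(d:ℝ)^6 + 18358*(b:ℝ)^3*(d:ℝ)^7 + 1329*(b:ℝ)^3*(d:ℝ)^8 + 31*(b:ℝ)^3*(d:ℝ)^9 + 262888*(b:ℝ)^4 + 1424484*(b:ℝ)^4*(d:ℝ) + 2447268*(b:ℝ)^4*(d:ℝ)^2 + 2169844*(b:ℝ)^4*(d:ℝ)^3 + 1140729*(b:ℝ)^4*(d:ℝ)^4 + 364449*(b:ℝ)^4*(d:ℝ)^5 + 67509*(b:ℝ)^4*(d:ℝ)^6 + 6338*(b:ℝ)^4*(d:ℝ)^7 + 213*(b:ℝ)^4*(d:ℝ)^8 + 264728*(b:ℝ)^5 + 1393448*(b:ℝ)^5*(d:ℝ)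 + 2132724*(b:ℝ)^5*(d:ℝ)^2 + 1602305*(b:ℝ)^5*(d:ℝ)^3 + 673904*(b:ℝ)^5*(d:ℝ)^4 + 159048*(b:ℝ)^5*(d:ℝ)^5 + 19053*(b:ℝ)^5*(d:ℝ)^6 + 852*(b:ℝ)^5*(d:ℝ)^7 + 188448*(b:ℝ)^6 + 959536*(b:ℝ)^6*(d:ℝ) + 1269266*(b:ℝ)^6*(d:ℝ)^2 + 773151*(b:ℝ)^6*(d:ℝ)^3 + 243321*(b:ℝ)^6*(d:ℝ)^4 + 37668*(b:ℝ)^6*(d:ℝ)^5 + 2188*(b:ℝ)^6*(d:ℝ)^6 + 94832*(b:ℝ)^7 + 464988*(b:ℝ)^7*(d:ℝ) + 509642*(b:ℝ)^7*(d:ℝ)^2 + 235400*(b:ℝ)^7*(d:ℝ)^3 + 49196*(b:ℝ)^7*(d:ℝ)^4 + 3744*(b:ℝ)^7*(d:ℝ)^5 + 33064*(b:ℝ)^8 + 155364*(b:ℝ)^8*(d:ℝ) + 132200*(b:ℝ)^8*(d:ℝ)^2 + 41088*(b:ℝ)^8*(d:ℝ)^3 + 4272*(b:ℝ)^8*(d:ℝ)^4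 + 7608*(b:ℝ)^9 + 34080*(b:ℝ)^9*(d:ℝ) + 20016*(b:ℝ)^9*(d:ℝ)^2 + 3136*(b:ℝ)^9*(d:ℝ)^3 + 1040*(b:ℝ)^10 + 4416*(b:ℝ)^10*(d:ℝ) + 1344*(b:ℝ)^10*(d:ℝ)^2 + 64*(b:ℝ)^11 + 256*(b:ℝ)^11*(d:ℝ) := by ring
  have hQ : (0:ℝ) < 2688 + 15776*(d:ℝ) + 35080*(d:ℝ)^2 + 45518*(d:ℝ)^3 + 40899*(d:ℝ)^4 + 27103*(d:ℝ)^5 + 13193*(d:ℝ)^6 + 4527*(d:ℝ)^7 + 1024*(d:ℝ)^8 + 136*(d:ℝ)^9 + 8*(d:ℝ)^10 + 22144*(b:ℝ) + 128016*(b:ℝ)*(d:ℝ) + 273808*(b:ℝ)*(d:ℝ)^2 + 334957*(b:ℝ)*(d:ℝ)^3 + 274428*(b:ℝ)*(d:ℝ)^4 + 158620*(b:ℝ)*(d:ℝ)^5 + 64240*(b:ℝ)*(d:ℝ)^6 + 17451*(b:ℝ)*(d:ℝ)^7 + 2932*(b:ℝ)*(d:ℝ)^8 + 260*(b:ℝ)*(d:ℝ)^9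 + 8*(b:ℝ)*(d:ℝ)^10 + 82112*(b:ℝ)^2 + 466152*(b:ℝ)^2*(d:ℝ) + 943738*(b:ℝ)^2*(d:ℝ)^2 + 1063071*(b:ℝ)^2*(d:ℝ)^3 + 773581*(b:ℝ)^2*(d:ℝ)^4 + 380131*(b:ℝ)^2*(d:ℝ)^5 + 124569*(b:ℝ)^2*(d:ℝ)^6 + 25774*(b:ℝ)^2*(d:ℝ)^7 + 3016*(b:ℝ)^2*(d:ℝ)^8 + 158*(b:ℝ)^2*(d:ℝ)^9 + 2*(b:ℝ)^2*(d:ℝ)^10 + 180864*(b:ℝ)^3 + 1004940*(b:ℝ)^3*(d:ℝ) + 1892706*(b:ℝ)^3*(d:ℝ)^2 + 1916874*(b:ℝ)^3*(d:ℝ)^3 + 1205274*(b:ℝ)^3*(d:ℝ)^4 + 487944*(b:ℝ)^3*(d:ℝ)^5 + 124184*(b:ℝ)^3*(d:ℝ)^6 + 18358*(b:ℝ)^3*(d:ℝ)^7 + 1329*(b:ℝ)^3*(d:ℝ)^8 + 31*(b:ℝ)^3*(d:ℝ)^9 + 262888*(b:ℝ)^4 + 1424484*(b:ℝ)^4*(d:ℝ)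 + 2447268*(b:ℝ)^4*(d:ℝ)^2 + 2169844*(b:ℝ)^4*(d:ℝ)^3 + 1140729*(b:ℝ)^4*(d:ℝ)^4 + 364449*(b:ℝ)^4*(d:ℝ)^5 + 67509*(b:ℝ)^4*(d:ℝ)^6 + 6338*(b:ℝ)^4*(d:ℝ)^7 + 213*(b:ℝ)^4*(d:ℝ)^8 + 264728*(b:ℝ)^5 + 1393448*(b:ℝ)^5*(d:ℝ) + 2132724*(b:ℝ)^5*(d:ℝ)^2 + 1602305*(b:ℝ)^5*(d:ℝ)^3 + 673904*(b:ℝ)^5*(d:ℝ)^4 + 159048*(b:ℝ)^5*(d:ℝ)^5 + 19053*(b:ℝ)^5*(d:ℝ)^6 + 852*(b:ℝ)^5*(d:ℝ)^7 + 188448*(b:ℝ)^6 + 959536*(b:ℝ)^6*(d:ℝ) + 1269266*(b:ℝ)^6*(d:ℝ)^2 + 773151*(b:ℝ)^6*(d:ℝ)^3 + 243321*(b:ℝ)^6*(d:ℝ)^4 + 37668*(b:ℝ)^6*(d:ℝ)^5 + 2188*(b:ℝ)^6*(d:ℝ)^6 + 94832*(b:ℝ)^7 + 464988*(b:ℝ)^7*(d:ℝ)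 + 509642*(b:ℝ)^7*(d:ℝ)^2 + 235400*(b:ℝ)^7*(d:ℝ)^3 + 49196*(b:ℝ)^7*(d:ℝ)^4 + 3744*(b:ℝ)^7*(d:ℝ)^5 + 33064*(b:ℝ)^8 + 155364*(b:ℝ)^8*(d:ℝ) + 132200*(b:ℝ)^8*(d:ℝ)^2 + 41088*(b:ℝ)^8*(d:ℝ)^3 + 4272*(b:ℝ)^8*(d:ℝ)^4 + 7608*(b:ℝ)^9 + 34080*(b:ℝ)^9*(d:ℝ) + 20016*(b:ℝ)^9*(d:ℝ)^2 + 3136*(b:ℝ)^9*(d:ℝ)^3 + 1040*(b:ℝ)^10 + 4416*(b:ℝ)^10*(d:ℝ) + 1344*(b:ℝ)^10*(d:ℝ)^2 + 64*(b:ℝ)^11 + 256*(b:ℝ)^11*(d:ℝ) := by positivity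
  linarith


lemma Ufun_eq (x y : ℕ) (hx : 2 ≤ x) :
    Ufun x y = ((x.choose y : ℝ)^4 * ((((x:ℝ)-(y:ℝ)+1)*((y:ℝ)+1))^(2*x-3))) /
      (4 * ((((x:ℝ)+1)*((x:ℝ)+2))^(2*x-3))) := by
  have hcast : ((2*x-3 : ℕ) : ℝ) = 2*(x:ℝ)-3 := by
    rw [Nat.cast_sub (by omega)]; push_cast; ring
  unfold Ufun
  rw [← hcast, Real.rpow_natCast, div_pow]
  ring

lemma Ufun_pos (x y : ℕ) (h : y ≤ x) : 0 < Ufun x y := by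
  have hc : 0 < (x.choose y : ℝ) := by exact_mod_cast Nat.choose_pos h
  have hyx : (y:ℝ) ≤ (x:ℝ) := by exact_mod_cast h
  have hbase : 0 < (((x:ℝ)-(y:ℝ)+1)*((y:ℝ)+1)) / (((x:ℝ)+1)*((x:ℝ)+2)) := by
    apply div_pos (mul_pos (by linarith) (by positivity)) (by positivity)
  exact mul_pos (mul_pos (by norm_num) (pow_pos hc 4)) (Real.rpow_pos_of_pos hbase _)

lemma sc1 : Ufun 1 0 < Ufun 0 0 := by unfold Ufun; norm_num

lemma sc2 : Ufun 2 0 < Ufun 1 0 := by unfold Ufun; norm_num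

lemma sc3 : Ufun 1 1 < Ufun 2 1 := by unfold Ufun; norm_num

lemma Ufun_dec (y x : ℕ) (h : 2*y ≤ x) : Ufun (x+1) y < Ufun x y := by
  rcases Nat.lt_or_ge x 2 with hx2 | hx2
  · have hy : y = 0 := by omega
    subst hy
    interval_cases x
    · exact sc1
    · exact sc2
  · have hyx : y ≤ x := by omega
    have hYX : (y:ℝ) ≤ (x:ℝ) := by exact_mod_cast hyx
    have hY0 : (0:ℝ) ≤ (y:ℝ) := by positivity
    have h2Y : 2*(y:ℝ) ≤ (x:ℝ) := by exact_mod_cast h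
    rw [Ufun_eq x y hx2, Ufun_eq (x+1) y (by omega),
        show 2*(x+1)-3 = 2*x-3+2 from by omega,
        div_lt_div_iff₀ (by positivity) (by positivity)]
    refine core1 _ _ ((x:ℝ)+1) ((x:ℝ)-(y:ℝ)+1) _ _ _ _ (2*x-3)
      ?_ ?_ ?_ ?_ ?_ ?_ ?_ ?_ ?_
    · exact_mod_cast Nat.choose_pos hyx
    · linarith
    · exact mul_pos (by linarith) (by positivity)
    · positivity
    · exact mul_nonneg (by push_cast; linarith) (by positivity)
    · positivity
    · have h1 := congrArg (Nat.cast : ℕ → ℝ) (Nat.choose_mul_succ_eq x y)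
      push_cast [Nat.cast_sub (show y ≤ x+1 by omega)] at h1
      linarith
    · push_cast
      nlinarith [mul_nonneg (mul_nonneg (show (0:ℝ) ≤ (y:ℝ)+1 by positivity)
          (show (0:ℝ) ≤ (x:ℝ)+2 by positivity))
          (show (0:ℝ) ≤ (x:ℝ)-2*(y:ℝ)+1 by linarith)]
    · have k1 : ((x:ℝ)+1)^2*(((x:ℝ)-(y:ℝ)+2)*((y:ℝ)+1)) <
          ((x:ℝ)-(y:ℝ)+1)^2*(((x:ℝ)+2)*((x:ℝ)+3)) := by
        nlinarith [sq_nonneg ((x:ℝ)-2*(y:ℝ)), sq_nonneg (x:ℝ), sq_nonneg (y:ℝ),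
          mul_nonneg hY0 (show (0:ℝ) ≤ (x:ℝ)-2*(y:ℝ) by linarith)]
      have k0 : (0:ℝ) ≤ ((x:ℝ)+1)^2*(((x:ℝ)-(y:ℝ)+2)*((y:ℝ)+1)) :=
        mul_nonneg (by positivity) (mul_nonneg (by linarith) (by positivity))
      have k2 := mul_lt_mul'' k1 k1 k0 k0
      push_cast
      nlinarith [k2]

lemma Ufun_inc (y x : ℕ) (h1 : y ≤ x) (h2 : x < 2*y) : Ufun x y < Ufun (x+1) y := by
  rcases Nat.lt_or_ge x 2 with hx2 | hx2
  · have hx : x = 1 := by omega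
    have hy : y = 1 := by omega
    subst hx; subst hy; exact sc3
  · obtain ⟨b, hb⟩ : ∃ b, x = y + b := ⟨x - y, by omega⟩
    obtain ⟨d, hd⟩ : ∃ d, 2*y = x + 1 + d := ⟨2*y - (x+1), by omega⟩
    have hx : x = 2*b+d+1 := by omega
    have hy : y = b+d+1 := by omega
    subst hx
    subst hy
    clear hb hd h1 h2
    have hB : (0:ℝ) ≤ (b:ℝ) := Nat.cast_nonneg b
    have hD : (0:ℝ) ≤ (d:ℝ) := Nat.cast_nonneg d
    rw [Ufun_eq _ _ hx2, Ufun_eq _ _ (by omega),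
        show 2*(2*b+d+1+1)-3 = 2*(2*b+d+1)-4+1+2 from by omega,
        show 2*(2*b+d+1)-3 = 2*(2*b+d+1)-4+1 from by omega,
        div_lt_div_iff₀ (by positivity) (by positivity)]
    refine core2 _ _ (((2*b+d+1:ℕ):ℝ)+1) (((2*b+d+1:ℕ):ℝ)-((b+d+1:ℕ):ℝ)+1) _ _ _ _
      (2*(2*b+d+1)-4) ?_ ?_ ?_ ?_ ?_ ?_ ?_ ?_ ?_ ?_
    · exact_mod_cast Nat.choose_pos (show b+d+1 ≤ 2*b+d+1 by omega)
    · positivity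
    · push_cast; linarith
    · exact mul_pos (by push_cast; linarith) (by positivity)
    · positivity
    · exact mul_pos (by push_cast; linarith) (by positivity)
    · positivity
    · have h1 := congrArg (Nat.cast : ℕ → ℝ)
        (Nat.choose_mul_succ_eq (2*b+d+1) (b+d+1))
      have hsub : 2*b+d+1+1-(b+d+1) = b+1 := by omega
      rw [hsub] at h1
      push_cast at h1
      push_cast
      linarith
    · push_cast
      nlinarith [mul_nonneg (mul_nonneg (show (0:ℝ) ≤ (b:ℝ)+(d:ℝ)+2 by positivity)
          (show (0:ℝ) ≤ 2*(b:ℝ)+(d:ℝ)+3 by positivity)) hD]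
    · have hm : ((2*(2*b+d+1)-4 : ℕ):ℝ) = 4*(b:ℝ)+2*(d:ℝ)-2 := by
        rw [Nat.cast_sub (by omega)]; push_cast; ring
      rw [hm]
      push_cast
      nlinarith [key2R b d]

end UfunAux

open UfunAux in
/-- For every integer `y ≥ 0`, the ratio `U(x+1,y)/U(x,y)` is `< 1` for
`x ≥ 2y` and `> 1` for `y ≤ x < 2y`; hence the maximum of `x ↦ U(x,y)` over
`x ≥ y` is attained at `x = 2y`. -/
theorem Ufun_max_at_twice (y : ℕ) :
    (∀ x : ℕ, 2 * y ≤ x → Ufun (x + 1) y / Ufun x y < 1) ∧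
    (∀ x : ℕ, y ≤ x → x < 2 * y → 1 < Ufun (x + 1) y / Ufun x y) ∧
    (∀ x : ℕ, y ≤ x → Ufun x y ≤ Ufun (2 * y) y) := by
  refine ⟨fun x hx => ?_, fun x hyx hlt => ?_, fun x hyx => ?_⟩
  · exact (div_lt_one (Ufun_pos x y (by omega))).2 (Ufun_dec y x hx)
  · exact (one_lt_div (Ufun_pos x y hyx)).2 (Ufun_inc y x hyx hlt)
  · have hup : ∀ n x', y ≤ x' → x' + n = 2*y → Ufun x' y ≤ Ufun (2*y) y := by
      intro n
      induction n with
      | zero =>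
        intro x' h1 h2
        have : x' = 2*y := by omega
        rw [this]
      | succ n ih =>
        intro x' h1 h2
        exact le_trans (le_of_lt (Ufun_inc y x' h1 (by omega)))
          (ih (x'+1) (by omega) (by omega))
    have hdown : ∀ n, Ufun (2*y + n) y ≤ Ufun (2*y) y := by
      intro n
      induction n with
      | zero => exact le_refl _
      | succ n ih =>
        exact le_trans (le_of_lt (Ufun_dec y (2*y+n) (by omega))) ih
    rcases le_or_gt x (2*y) with hle | hgt
    · exact hup (2*y - x) x hyx (by omega)
    · obtain ⟨n, hn⟩ : ∃ n, x = 2*y + n := ⟨x - 2*y, by omega⟩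
      rw [hn]; exact hdown n
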